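/- arXiv:1912.11119 — 3 statements merged into one kernel-verified Lean document; each statement's English description precedes it below -/
import Mathlib

section
/- If p_λ is concave, nondecreasing, continuously differentiable on (0,∞) with p_λ(0)=0 and θ₀ ≠ 0, then the local quadratic approximation G(θ|θ₀) = p_λ(|θ₀|) + (θ² − θ₀²) p'_λ(|θ₀|+)/(2|θ₀|) majorizes θ ↦ p_λ(|θ|) at θ₀. -/
open Filter Set Topology

/-!
Concavity puts the graph of `p` below each of its tangent lines on `(0, ∞)`; letting the point of
tangency decrease to `|θ₀|` gives `p t ≤ p |θ₀| + (t - |θ₀|) q` for `t > 0`, where `q = p'(|θ₀|+)`.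
Monotonicity makes `q ≥ 0` and handles `t = 0` through `p 0 ≤ p (|θ₀| / 2)`. Finally the linear
term is bounded by the quadratic one: `t - a ≤ (t² - a²) / (2a)` for `a > 0` is `(t - a)² ≥ 0`.
-/

namespace ConcaveOn

variable {S : Set ℝ} {f f' : ℝ → ℝ} {x y a d q : ℝ}

theorem le_add_sub_mul_of_hasDerivAt (hfc : ConcaveOn ℝ S f) (hx : x ∈ S) (hy : y ∈ S)
    (hf : HasDerivAt f d x) : f y ≤ f x + (y - x) * d := by
  rcases lt_trichotomy y x with hyx | rfl | hxy
  · have h := hfc.le_slope_of_hasDerivAt hy hx hyx hf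
    rw [slope_def_field, le_div_iff₀ (sub_pos.mpr hyx)] at h
    linarith
  · simp
  · have h := hfc.slope_le_of_hasDerivAt hx hy hxy hf
    rw [slope_def_field, div_le_iff₀ (sub_pos.mpr hxy)] at h
    linarith

theorem le_add_sub_mul_of_tendsto_nhdsGT (hfc : ConcaveOn ℝ S f) (ha : a ∈ S) (hS : S ∈ 𝓝[>] a)
    (hderiv : ∀ x ∈ S, HasDerivAt f (f' x) x) (hq : Tendsto f' (𝓝[>] a) (𝓝 q)) (hy : y ∈ S) :
    f y ≤ f a + (y - a) * q := by
  have hlim : Tendsto (fun s => f s + (y - s) * f' s) (𝓝[>] a) (𝓝 (f a + (y - a) * q)) := by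
    refine (hderiv a ha).continuousAt.continuousWithinAt.tendsto.add (Tendsto.mul ?_ hq)
    exact (continuous_const.sub continuous_id).continuousWithinAt.tendsto
  refine ge_of_tendsto hlim ?_
  filter_upwards [hS] with s hs
  exact hfc.le_add_sub_mul_of_hasDerivAt hs hy (hderiv s hs)

end ConcaveOn

theorem sub_mul_le_sq_sub_sq_mul_div {a q : ℝ} (ha : 0 < a) (hq : 0 ≤ q) (t : ℝ) :
    (t - a) * q ≤ (t ^ 2 - a ^ 2) * q / (2 * a) := by
  rw [le_div_iff₀ (by positivity)]
  nlinarith [mul_nonneg (sq_nonneg (t - a)) hq]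

theorem lqa_majorizes_general (p p' : ℝ → ℝ) (θ₀ : ℝ) (hθ₀ : θ₀ ≠ 0) (q : ℝ)
    (hderiv : ∀ x ∈ Set.Ioi (0 : ℝ), HasDerivAt p (p' x) x)
    (hmono : MonotoneOn p (Set.Ici 0))
    (hconc : ConcaveOn ℝ (Set.Ioi 0) p)
    (hq : Tendsto p' (nhdsWithin |θ₀| (Set.Ioi |θ₀|)) (nhds q)) :
    (∀ θ : ℝ, p |θ| ≤ p |θ₀| + (θ ^ 2 - θ₀ ^ 2) * q / (2 * |θ₀|)) ∧
    p |θ₀| + (θ₀ ^ 2 - θ₀ ^ 2) * q / (2 * |θ₀|) = p |θ₀| := by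
  set a := |θ₀|
  have ha : 0 < a := abs_pos.mpr hθ₀
  have htan : ∀ t > 0, p t ≤ p a + (t - a) * q := fun t ht =>
    hconc.le_add_sub_mul_of_tendsto_nhdsGT ha (mem_nhdsWithin_of_mem_nhds (Ioi_mem_nhds ha))
      hderiv hq ht
  have hq0 : 0 ≤ q := by
    have hmono_a : p a ≤ p (a + 1) := hmono ha.le (mem_Ici.mpr (by positivity)) (by linarith)
    linarith [htan (a + 1) (by positivity)]
  refine ⟨fun θ => ?_, by simp⟩
  rw [← sq_abs θ, ← sq_abs θ₀]
  rcases (abs_nonneg θ).eq_or_lt with h | h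
  · calc p |θ| = p 0 := by rw [← h]
      _ ≤ p (a / 2) := hmono self_mem_Ici (mem_Ici.mpr (by positivity)) (by positivity)
      _ ≤ p a + (a / 2 - a) * q := htan _ (half_pos ha)
      _ = p a + (|θ| ^ 2 - a ^ 2) * q / (2 * a) := by rw [← h]; field_simp; ring
  · exact (htan _ h).trans (by gcongr; exact sub_mul_le_sq_sub_sq_mul_div ha hq0 _)

/-- The local quadratic approximation
G(θ|θ₀) = p(|θ₀|) + (θ² − θ₀²)p'(|θ₀|+)/(2|θ₀|), for θ₀ ≠ 0,
majorizes θ ↦ p(|θ|) at θ₀. -/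
theorem lqa_majorizes (p p' : ℝ → ℝ) (θ₀ : ℝ) (hθ₀ : θ₀ ≠ 0) (q : ℝ)
    (hderiv : ∀ x ∈ Set.Ioi (0 : ℝ), HasDerivAt p (p' x) x)
    (hcont : ContinuousOn p' (Set.Ioi 0))
    (hmono : MonotoneOn p (Set.Ici 0))
    (hconc : ConcaveOn ℝ (Set.Ioi 0) p)
    (hp0 : p 0 = 0)
    (hq : Tendsto p' (nhdsWithin |θ₀| (Set.Ioi |θ₀|)) (nhds q)) :
    (∀ θ : ℝ, p |θ| ≤ p |θ₀| + (θ ^ 2 - θ₀ ^ 2) * q / (2 * |θ₀|)) ∧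
    p |θ₀| + (θ₀ ^ 2 - θ₀ ^ 2) * q / (2 * |θ₀|) = p |θ₀| :=
  lqa_majorizes_general p p' θ₀ hθ₀ q hderiv hmono hconc hq
end

section
/- Suppose ℓ(·|z) majorizes L at each z, both continuously differentiable, and ∇L(φ*) = ∇ℓ(φ*|φ*). If φ* is a local minimizer of F(φ) = L(φ) + Λ(φ) with Λ locally Lipschitz, then ∂_C Q(φ*|φ*) = ∂_C F(φ*) and 0 ∈ ∂_C Q(φ*|φ*), where Q(φ|φ*) = ℓ(φ|φ*) + Λ(φ). -/
open Filter

variable {m : ℕ}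

/-- Clarke directional derivative of f at x in direction ε. -/
noncomputable def clarkeDeriv (f : EuclideanSpace ℝ (Fin m) → ℝ)
    (x ε : EuclideanSpace ℝ (Fin m)) : ℝ :=
  Filter.limsup (fun q : EuclideanSpace ℝ (Fin m) × ℝ => (f (q.1 + q.2 • ε) - f q.1) / q.2)
    ((nhds x) ×ˢ (nhdsWithin 0 (Set.Ioi 0)))

/-- Clarke subdifferential of f at x. -/
noncomputable def clarkeSubdiff (f : EuclideanSpace ℝ (Fin m) → ℝ)
    (x : EuclideanSpace ℝ (Fin m)) : Set (EuclideanSpace ℝ (Fin m)) :=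
  {v | ∀ d, inner ℝ v d ≤ clarkeDeriv f x d}

/-! If `f` is strictly differentiable at `x` and `h` is locally Lipschitz, the difference
quotients of `f` converge to `f' d` along `𝓝 x ×ˢ 𝓝[>] 0` while those of `h` stay bounded, so
`(f + h)°(x; d) = f' d + h°(x; d)`. Since `ℓ(·|φ*)` and `L` are C¹ with the same derivative at
`φ*`, the Clarke directional derivatives of `Q(·|φ*)` and `F` at `φ*` agree, hence so do their
subdifferentials. At a local minimizer the difference quotients along the ray `t ↦ φ* + t • d`
are eventually nonnegative, which forces `F°(φ*; d) ≥ 0` for every `d`, i.e. `0 ∈ ∂_C F(φ*)`. -/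

open Topology Asymptotics

theorem limsup_add_of_tendsto {ι : Type*} {l : Filter ι} [l.NeBot] {u v : ι → ℝ} {c : ℝ}
    (hv : Tendsto v l (𝓝 c)) (hu : IsBoundedUnder (· ≤ ·) l fun i => |u i|) :
    limsup (fun i => v i + u i) l = c + limsup u l := by
  obtain ⟨hu_le, hu_ge⟩ := isBoundedUnder_le_abs.1 hu
  apply le_antisymm
  · have := limsup_add_le hv.isBoundedUnder_ge hv.isBoundedUnder_le hu_ge.isCoboundedUnder_le hu_le
    rwa [hv.limsup_eq] at this
  · have := le_limsup_add hu_le hu_ge.isCoboundedUnder_le hv.isBoundedUnder_le hv.isBoundedUnder_ge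
    rwa [hv.liminf_eq, add_comm, add_comm u] at this

section DifferenceQuotient

variable {E : Type*} [NormedAddCommGroup E] [NormedSpace ℝ E]

theorem tendsto_add_smul_nhds_prod (x d : E) :
    Tendsto (fun q : E × ℝ => q.1 + q.2 • d) (𝓝 x ×ˢ 𝓝[>] 0) (𝓝 x) := by
  have hcont : Continuous fun q : E × ℝ => q.1 + q.2 • d := by fun_prop
  have h := hcont.tendsto (x, 0)
  rw [nhds_prod_eq] at h
  simpa using h.mono_left (prod_mono le_rfl nhdsWithin_le_nhds)

theorem LocallyLipschitz.isBoundedUnder_abs_diffQuot {f : E → ℝ} (hf : LocallyLipschitz f)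
    (x d : E) :
    IsBoundedUnder (· ≤ ·) (𝓝 x ×ˢ 𝓝[>] 0)
      fun q : E × ℝ => |(f (q.1 + q.2 • d) - f q.1) / q.2| := by
  obtain ⟨K, s, hs, hK⟩ := hf x
  refine isBoundedUnder_of_eventually_le (a := K * ‖d‖) ?_
  filter_upwards [tendsto_fst.eventually_mem hs, (tendsto_add_smul_nhds_prod x d).eventually_mem hs,
    tendsto_snd.eventually self_mem_nhdsWithin] with ⟨y, t⟩ hy hyt (ht : 0 < t)
  calc |(f (y + t • d) - f y) / t| = dist (f (y + t • d)) (f y) / t := by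
        rw [abs_div, abs_of_pos ht, Real.dist_eq]
    _ ≤ K * dist (y + t • d) y / t := by gcongr; exact hK.dist_le_mul _ hyt _ hy
    _ = K * ‖d‖ := by
        rw [dist_eq_norm, add_sub_cancel_left, norm_smul, Real.norm_of_nonneg ht.le]; field_simp

theorem HasStrictFDerivAt.tendsto_diffQuot {f : E → ℝ} {f' : E →L[ℝ] ℝ} {x : E}
    (hf : HasStrictFDerivAt f f' x) (d : E) :
    Tendsto (fun q : E × ℝ => (f (q.1 + q.2 • d) - f q.1) / q.2) (𝓝 x ×ˢ 𝓝[>] 0)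
      (𝓝 (f' d)) := by
  have hpair : Tendsto (fun q : E × ℝ => (q.1 + q.2 • d, q.1)) (𝓝 x ×ˢ 𝓝[>] 0) (𝓝 (x, x)) :=
    (tendsto_add_smul_nhds_prod x d).prodMk_nhds tendsto_fst
  have hstep : (fun q : E × ℝ => q.2 • d) =O[𝓝 x ×ˢ 𝓝[>] 0] fun q => q.2 :=
    isBigO_of_le' (c := ‖d‖) _ fun q => by rw [norm_smul, mul_comm]
  have ho := ((hf.isLittleO.comp_tendsto hpair).trans_isBigO
    (by simpa only [Function.comp_def, add_sub_cancel_left] using hstep)).tendsto_div_nhds_zero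
  rw [← tendsto_sub_nhds_zero_iff]
  refine ho.congr' ?_
  filter_upwards [tendsto_snd.eventually self_mem_nhdsWithin] with ⟨y, t⟩ (ht : 0 < t)
  simp only [Function.comp_apply, add_sub_cancel_left, map_smul, smul_eq_mul]
  field_simp

end DifferenceQuotient

theorem clarkeDeriv_add_of_hasStrictFDerivAt {g h : EuclideanSpace ℝ (Fin m) → ℝ}
    {g' : EuclideanSpace ℝ (Fin m) →L[ℝ] ℝ} {x : EuclideanSpace ℝ (Fin m)}
    (hg : HasStrictFDerivAt g g' x) (hh : LocallyLipschitz h) (d : EuclideanSpace ℝ (Fin m)) :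
    clarkeDeriv (fun y => g y + h y) x d = g' d + clarkeDeriv h x d := by
  have hsplit : (fun q : EuclideanSpace ℝ (Fin m) × ℝ =>
      (g (q.1 + q.2 • d) + h (q.1 + q.2 • d) - (g q.1 + h q.1)) / q.2) =
      fun q => (g (q.1 + q.2 • d) - g q.1) / q.2 + (h (q.1 + q.2 • d) - h q.1) / q.2 := by
    funext q; rw [← add_div]; ring_nf
  rw [clarkeDeriv, hsplit]
  exact limsup_add_of_tendsto (hg.tendsto_diffQuot d) (hh.isBoundedUnder_abs_diffQuot x d)

theorem IsLocalMin.clarkeDeriv_nonneg {f : EuclideanSpace ℝ (Fin m) → ℝ}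
    {x : EuclideanSpace ℝ (Fin m)} (hmin : IsLocalMin f x) (hf : LocallyLipschitz f)
    (d : EuclideanSpace ℝ (Fin m)) : 0 ≤ clarkeDeriv f x d := by
  set Q := fun q : EuclideanSpace ℝ (Fin m) × ℝ => (f (q.1 + q.2 • d) - f q.1) / q.2
  have hray : Tendsto (fun t : ℝ => (x, t)) (𝓝[>] 0) (𝓝 x ×ˢ 𝓝[>] 0) :=
    tendsto_const_nhds.prodMk tendsto_id
  have hQ_nonneg : ∀ᶠ t in 𝓝[>] (0 : ℝ), 0 ≤ Q (x, t) := by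
    filter_upwards [hray.eventually ((tendsto_add_smul_nhds_prod x d).eventually hmin),
      self_mem_nhdsWithin] with t hft (ht : 0 < t)
    exact div_nonneg (sub_nonneg.2 hft) ht.le
  have hQ_bdd := (isBoundedUnder_le_abs.1 (hf.isBoundedUnder_abs_diffQuot x d)).1
  calc 0 ≤ limsup (Q ∘ fun t => (x, t)) (𝓝[>] 0) :=
        le_limsup_of_frequently_le hQ_nonneg.frequently (hray.isBoundedUnder_comp hQ_bdd)
    _ = limsup Q (map (fun t => (x, t)) (𝓝[>] 0)) := limsup_comp ..
    _ ≤ limsup Q (𝓝 x ×ˢ 𝓝[>] 0) :=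
        limsup_le_limsup_of_le hray
          (isBoundedUnder_of_eventually_ge (eventually_map.2 hQ_nonneg)).isCoboundedUnder_le hQ_bdd

theorem IsLocalMin.zero_mem_clarkeSubdiff {f : EuclideanSpace ℝ (Fin m) → ℝ}
    {x : EuclideanSpace ℝ (Fin m)} (hmin : IsLocalMin f x) (hf : LocallyLipschitz f) :
    0 ∈ clarkeSubdiff f x := fun d => by
  simpa only [inner_zero_left] using hmin.clarkeDeriv_nonneg hf d

theorem clarke_subdiff_surrogate_eq_general
    (L : EuclideanSpace ℝ (Fin m) → ℝ)
    (ℓ : EuclideanSpace ℝ (Fin m) → EuclideanSpace ℝ (Fin m) → ℝ)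
    (Λ : EuclideanSpace ℝ (Fin m) → ℝ)
    (hL : ContDiff ℝ 1 L) (hℓ : ∀ z, ContDiff ℝ 1 (fun φ => ℓ φ z))
    (hΛ : LocallyLipschitz Λ)
    (φs : EuclideanSpace ℝ (Fin m))
    (hgrad : gradient L φs = gradient (fun φ => ℓ φ φs) φs)
    (hmin : IsLocalMin (fun φ => L φ + Λ φ) φs) :
    clarkeSubdiff (fun φ => ℓ φ φs + Λ φ) φs =
      clarkeSubdiff (fun φ => L φ + Λ φ) φs ∧
    0 ∈ clarkeSubdiff (fun φ => ℓ φ φs + Λ φ) φs := by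
  have hfderiv : fderiv ℝ (fun φ => ℓ φ φs) φs = fderiv ℝ L φs :=
    (InnerProductSpace.toDual ℝ _).symm.injective hgrad.symm
  have hderiv : clarkeDeriv (fun φ => ℓ φ φs + Λ φ) φs = clarkeDeriv (fun φ => L φ + Λ φ) φs := by
    funext d
    rw [clarkeDeriv_add_of_hasStrictFDerivAt ((hℓ φs).hasStrictFDerivAt one_ne_zero) hΛ,
      clarkeDeriv_add_of_hasStrictFDerivAt (hL.hasStrictFDerivAt one_ne_zero) hΛ, hfderiv]
  have hsubdiff : clarkeSubdiff (fun φ => ℓ φ φs + Λ φ) φs =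
      clarkeSubdiff (fun φ => L φ + Λ φ) φs := by
    simp only [clarkeSubdiff, hderiv]
  exact ⟨hsubdiff, hsubdiff ▸ hmin.zero_mem_clarkeSubdiff (hL.locallyLipschitz.add hΛ)⟩

/-- If ℓ(·|z) majorizes L at every z, both continuously differentiable,
with matching gradients at φ*, and φ* is a local minimizer of
F = L + Λ with Λ locally Lipschitz, then ∂_C Q(φ*|φ*) = ∂_C F(φ*) and
0 ∈ ∂_C Q(φ*|φ*), where Q(φ|φ*) = ℓ(φ|φ*) + Λ(φ). -/
theorem clarke_subdiff_surrogate_eq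
    (L : EuclideanSpace ℝ (Fin m) → ℝ)
    (ℓ : EuclideanSpace ℝ (Fin m) → EuclideanSpace ℝ (Fin m) → ℝ)
    (Λ : EuclideanSpace ℝ (Fin m) → ℝ)
    (hL : ContDiff ℝ 1 L) (hℓ : ∀ z, ContDiff ℝ 1 (fun φ => ℓ φ z))
    (hΛ : LocallyLipschitz Λ)
    (hmaj : ∀ z φ, L φ ≤ ℓ φ z) (heq : ∀ z, L z = ℓ z z)
    (φs : EuclideanSpace ℝ (Fin m))
    (hgrad : gradient L φs = gradient (fun φ => ℓ φ φs) φs)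
    (hmin : IsLocalMin (fun φ => L φ + Λ φ) φs) :
    clarkeSubdiff (fun φ => ℓ φ φs + Λ φ) φs =
      clarkeSubdiff (fun φ => L φ + Λ φ) φs ∧
    0 ∈ clarkeSubdiff (fun φ => ℓ φ φs + Λ φ) φs :=
  clarke_subdiff_surrogate_eq_general L ℓ Λ hL hℓ hΛ φs hgrad hmin
end

section
/- Consider the MM iteration with surrogate Q(φ|φ^{(k)}) = F(φ) + D_r(φ|φ^{(k)}), where F is convex, r is differentiable convex, and D_r is the Bregman divergence of r. If φ^{(k+1)} globally minimizes Q(·|φ^{(k)}), then for all φ: Q(φ|φ^{(k)}) − Q(φ^{(k+1)}|φ^{(k)}) ≥ D_r(φ|φ^{(k+1)}) = Q(φ|φ^{(k+1)}) − F(φ) (the SUMMA inequality). -/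
/-!
Expanding the Bregman divergences, the inequality reduces to the three-point identity
`D_r(φ|z) - D_r(w|z) - D_r(φ|w) = (r'(w) - r'(z)) (φ - w)` together with
`F w - F φ ≤ (r'(w) - r'(z)) (φ - w)`. The latter is first-order optimality of `w` for
`F + D_r(·|z)`: along the segment from `w` to `φ`, convexity bounds `F` by its chord, so
`t ↦ D_r(w + t (φ - w) | z) + t (F φ - F w)` is minimal at `t = 0` on `[0, 1]`, and its
right derivative there is nonnegative.
-/

open Set

variable {E : Type*} [NormedAddCommGroup E] [NormedSpace ℝ E]

/-- The Bregman divergence `D_r(x|y)`. -/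
noncomputable def bregmanDiv (r : E → ℝ) (x y : E) : ℝ :=
  r x - r y - fderiv ℝ r y (x - y)

theorem bregmanDiv_three_point (r : E → ℝ) (x y z : E) :
    bregmanDiv r x z - bregmanDiv r y z - bregmanDiv r x y =
      fderiv ℝ r y (x - y) - fderiv ℝ r z (x - y) := by
  have hsplit : x - z = (x - y) + (y - z) := by abel
  simp only [bregmanDiv, hsplit, map_add]
  ring

theorem hasFDerivAt_bregmanDiv_left {r : E → ℝ} {x : E} (hr : DifferentiableAt ℝ r x) (z : E) :
    HasFDerivAt (fun y => bregmanDiv r y z) (fderiv ℝ r x - fderiv ℝ r z) x := by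
  have hlin : HasFDerivAt (fun y => fderiv ℝ r z (y - z)) (fderiv ℝ r z) x :=
    (fderiv ℝ r z).hasFDerivAt.comp x ((hasFDerivAt_id x).sub_const z)
  exact (hr.hasFDerivAt.sub_const (r z)).sub hlin

theorem ConvexOn.sub_le_fderiv_of_isMinOn_add {s : Set E} {f g : E → ℝ} {w x : E}
    (hf : ConvexOn ℝ s f) (hg : DifferentiableAt ℝ g w)
    (hmin : IsMinOn (fun y => f y + g y) s w) (hw : w ∈ s) (hx : x ∈ s) :
    f w - f x ≤ fderiv ℝ g w (x - w) := by
  set v := x - w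
  set ψ : ℝ → ℝ := fun t => g (w + t • v) + t * (f x - f w)
  have hψmin : IsMinOn ψ (Icc 0 1) 0 := by
    intro t ⟨ht0, ht1⟩
    have hpoint : w + t • v = (1 - t) • w + t • x := by simp only [v]; module
    have hmem : w + t • v ∈ s := hpoint ▸ hf.1 hw hx (by linarith) ht0 (by ring)
    have hchord : f (w + t • v) ≤ (1 - t) * f w + t * f x := by
      rw [hpoint]; exact hf.2 hw hx (by linarith) ht0 (by ring)
    have hle : f w + g w ≤ f (w + t • v) + g (w + t • v) := hmin hmem
    show ψ 0 ≤ ψ t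
    simp only [ψ, zero_smul, add_zero, zero_mul]
    linarith
  have hψderiv : HasDerivAt ψ (fderiv ℝ g w v + (f x - f w)) 0 := by
    have hline : HasDerivAt (fun t : ℝ => w + t • v) v 0 := by
      simpa using ((hasDerivAt_id (0 : ℝ)).smul_const v).const_add w
    have hcomp : HasDerivAt (fun t : ℝ => g (w + t • v)) (fderiv ℝ g w v) 0 :=
      hg.hasFDerivAt.comp_hasDerivAt_of_eq (0 : ℝ) hline (by simp)
    exact hcomp.add (hasDerivAt_mul_const (f x - f w))
  have hcone : (1 : ℝ) ∈ posTangentConeAt (Icc (0 : ℝ) 1) 0 :=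
    mem_posTangentConeAt_of_segment_subset (by simp [segment_eq_Icc])
  have hnonneg := hψmin.localize.hasFDerivWithinAt_nonneg
    hψderiv.hasFDerivAt.hasFDerivWithinAt hcone
  rw [ContinuousLinearMap.toSpanSingleton_apply_one] at hnonneg
  linarith

theorem summa_inequality_general {m : ℕ}
    (F r : EuclideanSpace ℝ (Fin m) → ℝ)
    (hF : ConvexOn ℝ Set.univ F)
    (hr : Differentiable ℝ r)
    (z w : EuclideanSpace ℝ (Fin m))
    (hmin : IsMinOn
      (fun φ => F φ + (r φ - r z - fderiv ℝ r z (φ - z))) Set.univ w) :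
    ∀ φ : EuclideanSpace ℝ (Fin m),
      r φ - r w - fderiv ℝ r w (φ - w) ≤
        (F φ + (r φ - r z - fderiv ℝ r z (φ - z))) -
        (F w + (r w - r z - fderiv ℝ r z (w - z))) := by
  intro φ
  have hD := hasFDerivAt_bregmanDiv_left (hr w) z
  have hopt := hF.sub_le_fderiv_of_isMinOn_add hD.differentiableAt hmin (mem_univ w) (mem_univ φ)
  rw [hD.fderiv, sub_apply] at hopt
  have hthree := bregmanDiv_three_point r φ w z
  simp only [bregmanDiv] at hthree
  linarith

/-- The SUMMA inequality for the MM iteration with Bregman surrogate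
Q(φ|z) = F(φ) + D_r(φ|z): if w globally minimizes Q(·|z), then for all φ,
Q(φ|z) − Q(w|z) ≥ D_r(φ|w) = Q(φ|w) − F(φ). -/
theorem summa_inequality {m : ℕ}
    (F r : EuclideanSpace ℝ (Fin m) → ℝ)
    (hF : ConvexOn ℝ Set.univ F)
    (hr : Differentiable ℝ r) (hrconv : ConvexOn ℝ Set.univ r)
    (z w : EuclideanSpace ℝ (Fin m))
    (hmin : IsMinOn
      (fun φ => F φ + (r φ - r z - fderiv ℝ r z (φ - z))) Set.univ w) :
    ∀ φ : EuclideanSpace ℝ (Fin m),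
      r φ - r w - fderiv ℝ r w (φ - w) ≤
        (F φ + (r φ - r z - fderiv ℝ r z (φ - z))) -
        (F w + (r w - r z - fderiv ℝ r z (w - z))) :=
  summa_inequality_general F r hF hr z w hmin
end
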